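/- arXiv:1603.00631 — 4 statements merged into one kernel-verified Lean document; each statement's English description precedes it below -/
import Mathlib

section
/- Let φ be a Schwartz function on ℝ and set ψ(s) := φ(s) − 2φ(2s). For m ∈ ℕ define the truncated triangular Hilbert transform T_m(F,G)(x,y) := Σ_{j=1}^{m} ∫_ℝ F(x+s,y) G(x,y+s) 2^{-j} ψ(2^{-j}s) ds. Then there is a finite constant C_ψ depending only on ψ such that for all F, G ∈ L⁴(ℝ²) and all m ∈ ℕ, ‖T_m(F,G)‖_{L²(ℝ²)} ≤ C_ψ m^{1/2} ‖F‖_{L⁴(ℝ²)} ‖G‖_{L⁴(ℝ²)}. -/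
/-!
Since `ψ_{2t} = φ_{2t} - φ_t`, the sum over `j` telescopes: `T_m(F,G)` is the difference of the
single-scale averages of `F(x+s,y) G(x,y+s)` against `φ_{2^m}` and against `φ_1`. A single-scale
average against a weight `w` maps `L⁴ × L⁴` to `L²` with norm at most `‖w‖₁`: Minkowski's integral
inequality moves the `L²` norm inside the `s`-integral, and for fixed `s` Hölder's inequality and
the translation invariance of Lebesgue measure bound `‖F(·+s,·) G(·,·+s)‖₂ ≤ ‖F‖₄ ‖G‖₄`.
As `‖φ_t‖₁ = ‖φ‖₁`, the norm of `T_m(F,G)` is at most `2 ‖φ‖₁ ‖F‖₄ ‖G‖₄` for every `m ≥ 1`.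
-/

open MeasureTheory
open scoped ENNReal NNReal

/-- The dilate `φ_t(s) = t⁻¹ φ(t⁻¹ s)` of a function `φ : ℝ → ℂ`. -/
noncomputable def dil (φ : ℝ → ℂ) (t : ℝ) (s : ℝ) : ℂ :=
  (t : ℂ)⁻¹ * φ (t⁻¹ * s)

section

variable {α β : Type*} [MeasurableSpace α] [MeasurableSpace β] {μ : Measure α} {ν : Measure β}

theorem eLpNorm_two_sq {ε : Type*} [ENorm ε] (f : α → ε) :
    eLpNorm f 2 μ ^ 2 = ∫⁻ x, ‖f x‖ₑ ^ 2 ∂μ := by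
  simpa using eLpNorm_nnreal_pow_eq_lintegral (f := f) (μ := μ) (p := 2) two_ne_zero

theorem lintegral_mul_le_eLpNorm_two_mul {f g : α → ℝ≥0∞} (hf : AEMeasurable f μ)
    (hg : AEMeasurable g μ) : ∫⁻ x, f x * g x ∂μ ≤ eLpNorm f 2 μ * eLpNorm g 2 μ := by
  simpa [eLpNorm_eq_lintegral_rpow_enorm_toReal] using
    ENNReal.lintegral_mul_le_Lp_mul_Lq μ Real.HolderConjugate.two_two hf hg

theorem eLpNorm_two_lintegral_le [SFinite μ] [SFinite ν] {f : α → β → ℝ≥0∞}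
    (hf : Measurable (Function.uncurry f)) :
    eLpNorm (fun x => ∫⁻ y, f x y ∂ν) 2 μ ≤ ∫⁻ y, eLpNorm (fun x => f x y) 2 μ ∂ν := by
  have hfx (x : α) : Measurable (f x) := hf.comp measurable_prodMk_left
  have hfy (y : β) : Measurable (f · y) := hf.comp measurable_prodMk_right
  have hff : Measurable fun z : α × β × β => f z.1 z.2.1 * f z.1 z.2.2 :=
    (hf.comp (measurable_fst.prodMk measurable_snd.fst)).mul
      (hf.comp (measurable_fst.prodMk measurable_snd.snd))
  have hI : Measurable fun y => eLpNorm (f · y) 2 μ := by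
    simp_rw [eLpNorm_eq_lintegral_rpow_enorm_toReal two_ne_zero ENNReal.ofNat_ne_top]
    exact ((hf.pow_const _).lintegral_prod_left).pow_const _
  rw [← ENNReal.pow_le_pow_left_iff two_ne_zero, eLpNorm_two_sq]
  calc ∫⁻ x, ‖∫⁻ y, f x y ∂ν‖ₑ ^ 2 ∂μ
      = ∫⁻ x, ∫⁻ y, ∫⁻ y', f x y * f x y' ∂ν ∂ν ∂μ := by
        refine lintegral_congr fun x => ?_
        simp_rw [enorm_eq_self, sq, lintegral_const_mul _ (hfx x),
          ← lintegral_mul_const _ (hfx x)]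
    _ = ∫⁻ y, ∫⁻ y', ∫⁻ x, f x y * f x y' ∂μ ∂ν ∂ν := by
        rw [lintegral_lintegral_swap]
        · refine lintegral_congr fun y => lintegral_lintegral_swap ?_
          exact (hff.comp (measurable_fst.prodMk
            (measurable_const.prodMk measurable_snd))).aemeasurable
        · exact (Measurable.lintegral_prod_right' (hff.comp (measurable_fst.fst.prodMk
            (measurable_fst.snd.prodMk measurable_snd)))).aemeasurable
    _ ≤ ∫⁻ y, ∫⁻ y', eLpNorm (f · y) 2 μ * eLpNorm (f · y') 2 μ ∂ν ∂ν := by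
        gcongr with y y'
        exact lintegral_mul_le_eLpNorm_two_mul (hfy y).aemeasurable (hfy y').aemeasurable
    _ = (∫⁻ y, eLpNorm (f · y) 2 μ ∂ν) ^ 2 := by
        simp_rw [sq, lintegral_const_mul _ hI, lintegral_mul_const _ hI]

theorem ae_lt_top_of_eLpNorm_two_lt_top {f : α → ℝ≥0∞} (hf : AEMeasurable f μ)
    (h : eLpNorm f 2 μ < ∞) : ∀ᵐ x ∂μ, f x < ∞ := by
  have hint : ∫⁻ x, f x ^ 2 ∂μ ≠ ∞ := by
    simpa [eLpNorm_two_sq] using (ENNReal.pow_lt_top (n := 2) h).ne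
  filter_upwards [ae_lt_top' (hf.pow_const 2) hint] with x hx
  simpa using hx

end

theorem dil_two_mul_sub (φ : ℝ → ℂ) (t : ℝ) :
    dil (fun u => φ u - 2 * φ (2 * u)) (2 * t) = dil φ (2 * t) - dil φ t := by
  ext s
  simp only [dil, Pi.sub_apply, mul_inv, Complex.ofReal_mul]
  push_cast
  ring_nf

theorem measurable_dil {φ : ℝ → ℂ} (hφ : Measurable φ) (t : ℝ) : Measurable (dil φ t) := by
  unfold dil
  fun_prop

theorem eLpNorm_one_dil {φ : ℝ → ℂ} (hφ : Measurable φ) {t : ℝ} (ht : t ≠ 0) :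
    eLpNorm (dil φ t) 1 volume = eLpNorm φ 1 volume := by
  have hmap : Measure.map (t⁻¹ * ·) volume = ENNReal.ofReal |t| • volume := by
    simpa using Real.map_volume_mul_left (inv_ne_zero ht)
  have hscale : ‖(t : ℂ)⁻¹‖ₑ * ENNReal.ofReal |t| = 1 := by
    rw [enorm_inv (by exact_mod_cast ht), ← ofReal_norm, Complex.norm_real, Real.norm_eq_abs,
      ENNReal.inv_mul_cancel] <;> simp [ht]
  simp_rw [eLpNorm_one_eq_lintegral_enorm, dil, enorm_mul]
  rw [lintegral_const_mul' _ _ (by simp), ← lintegral_map hφ.enorm (measurable_const_mul _),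
    hmap, lintegral_smul_measure, smul_eq_mul, ← mul_assoc, hscale, one_mul]

theorem measurePreserving_add_fst (s : ℝ) :
    MeasurePreserving (fun p : ℝ × ℝ => (p.1 + s, p.2)) volume volume := by
  rw [Measure.volume_eq_prod]
  exact (measurePreserving_add_right volume s).prod (MeasurePreserving.id volume)

theorem measurePreserving_add_snd (s : ℝ) :
    MeasurePreserving (fun p : ℝ × ℝ => (p.1, p.2 + s)) volume volume := by
  rw [Measure.volume_eq_prod]
  exact (MeasurePreserving.id volume).prod (measurePreserving_add_right volume s)

theorem ae_ae_add_fst {P : ℝ × ℝ → Prop} (h : ∀ᵐ q, P q) :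
    ∀ᵐ p : ℝ × ℝ, ∀ᵐ s : ℝ, P (p.1 + s, p.2) := by
  have hqmp : Measure.QuasiMeasurePreserving (fun z : (ℝ × ℝ) × ℝ => (z.1.1 + z.2, z.1.2))
      (volume.prod volume) volume :=
    QuasiMeasurePreserving.prod_of_left (by fun_prop)
      (ae_of_all _ fun s => (measurePreserving_add_fst s).quasiMeasurePreserving)
  exact Measure.ae_ae_of_ae_prod (hqmp.ae h)

theorem ae_ae_add_snd {P : ℝ × ℝ → Prop} (h : ∀ᵐ q, P q) :
    ∀ᵐ p : ℝ × ℝ, ∀ᵐ s : ℝ, P (p.1, p.2 + s) := by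
  have hqmp : Measure.QuasiMeasurePreserving (fun z : (ℝ × ℝ) × ℝ => (z.1.1, z.1.2 + z.2))
      (volume.prod volume) volume :=
    QuasiMeasurePreserving.prod_of_left (by fun_prop)
      (ae_of_all _ fun s => (measurePreserving_add_snd s).quasiMeasurePreserving)
  exact Measure.ae_ae_of_ae_prod (hqmp.ae h)

theorem eLpNorm_two_mul_comp_add_le {F G : ℝ × ℝ → ℂ} (hF : AEStronglyMeasurable F)
    (hG : AEStronglyMeasurable G) (s : ℝ) :
    eLpNorm (fun p : ℝ × ℝ => F (p.1 + s, p.2) * G (p.1, p.2 + s)) 2 volume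
      ≤ eLpNorm F 4 volume * eLpNorm G 4 volume := by
  have : ENNReal.HolderTriple 4 4 2 := ⟨by
    rw [← two_mul, show (4 : ℝ≥0∞) = 2 * 2 by norm_num, ENNReal.mul_inv (by simp) (by simp),
      ← mul_assoc, ENNReal.mul_inv_cancel (by simp) (by simp), one_mul]⟩
  have hτ := measurePreserving_add_fst s
  have hσ := measurePreserving_add_snd s
  calc _ ≤ 1 * eLpNorm (F ∘ fun p : ℝ × ℝ => (p.1 + s, p.2)) 4 volume
        * eLpNorm (G ∘ fun p : ℝ × ℝ => (p.1, p.2 + s)) 4 volume :=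
        eLpNorm_le_eLpNorm_mul_eLpNorm_of_nnnorm (hF.comp_measurePreserving hτ)
          (hG.comp_measurePreserving hσ) (· * ·) 1 (ae_of_all _ fun p => by simp [nnnorm_mul])
    _ = _ := by
        rw [one_mul, eLpNorm_comp_measurePreserving hF hτ, eLpNorm_comp_measurePreserving hG hσ]

noncomputable def triangularOperator (F G : ℝ × ℝ → ℂ) (w : ℝ → ℂ) (p : ℝ × ℝ) : ℂ :=
  ∫ s, F (p.1 + s, p.2) * G (p.1, p.2 + s) * w s

section

variable {F G : ℝ × ℝ → ℂ} {w : ℝ → ℂ}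

theorem triangularOperator_ae_eq {F' G' : ℝ × ℝ → ℂ} (hF : F =ᵐ[volume] F')
    (hG : G =ᵐ[volume] G') :
    ∀ᵐ p, ∀ w, triangularOperator F G w p = triangularOperator F' G' w p := by
  filter_upwards [ae_ae_add_fst hF, ae_ae_add_snd hG] with p hpF hpG w
  refine integral_congr_ae ?_
  filter_upwards [hpF, hpG] with s hsF hsG
  rw [hsF, hsG]

theorem triangularOperator_sub {w₁ w₂ : ℝ → ℂ} {p : ℝ × ℝ}
    (h₁ : Integrable fun s => F (p.1 + s, p.2) * G (p.1, p.2 + s) * w₁ s)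
    (h₂ : Integrable fun s => F (p.1 + s, p.2) * G (p.1, p.2 + s) * w₂ s) :
    triangularOperator F G (w₁ - w₂) p
      = triangularOperator F G w₁ p - triangularOperator F G w₂ p := by
  simp only [triangularOperator, Pi.sub_apply, mul_sub, integral_sub h₁ h₂]

theorem eLpNorm_lintegral_enorm_triangular_le (hF : Measurable F) (hG : Measurable G)
    (hw : Measurable w) :
    eLpNorm (fun p : ℝ × ℝ => ∫⁻ s, ‖F (p.1 + s, p.2) * G (p.1, p.2 + s) * w s‖ₑ) 2 volume
      ≤ eLpNorm w 1 volume * eLpNorm F 4 volume * eLpNorm G 4 volume := by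
  have hmeas : Measurable fun z : (ℝ × ℝ) × ℝ =>
      ‖F (z.1.1 + z.2, z.1.2) * G (z.1.1, z.1.2 + z.2) * w z.2‖ₑ := by
    fun_prop
  calc _ ≤ ∫⁻ s, eLpNorm (fun p : ℝ × ℝ =>
          ‖F (p.1 + s, p.2) * G (p.1, p.2 + s) * w s‖ₑ) 2 volume :=
        eLpNorm_two_lintegral_le hmeas
    _ ≤ ∫⁻ s, ‖w s‖ₑ * (eLpNorm F 4 volume * eLpNorm G 4 volume) := by
        gcongr with s
        rw [eLpNorm_enorm]
        simp_rw [mul_comm _ (w s)]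
        refine (eLpNorm_const_smul (w s)
          (fun p : ℝ × ℝ => F (p.1 + s, p.2) * G (p.1, p.2 + s)) _ _).trans_le ?_
        gcongr
        exact eLpNorm_two_mul_comp_add_le hF.aestronglyMeasurable hG.aestronglyMeasurable s
    _ = _ := by rw [lintegral_mul_const _ hw.enorm, eLpNorm_one_eq_lintegral_enorm, mul_assoc]

theorem eLpNorm_triangularOperator_le (hF : Measurable F) (hG : Measurable G)
    (hw : Measurable w) :
    eLpNorm (triangularOperator F G w) 2 volume
      ≤ eLpNorm w 1 volume * eLpNorm F 4 volume * eLpNorm G 4 volume :=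
  (eLpNorm_mono_enorm fun _ => enorm_integral_le_lintegral_enorm _).trans
    (eLpNorm_lintegral_enorm_triangular_le hF hG hw)

theorem aestronglyMeasurable_triangularOperator (hF : Measurable F) (hG : Measurable G)
    (hw : Measurable w) : AEStronglyMeasurable (triangularOperator F G w) volume := by
  have : StronglyMeasurable fun z : (ℝ × ℝ) × ℝ =>
      F (z.1.1 + z.2, z.1.2) * G (z.1.1, z.1.2 + z.2) * w z.2 :=
    (by fun_prop : Measurable _).stronglyMeasurable
  exact this.integral_prod_right'.aestronglyMeasurable

theorem ae_integrable_triangularOperator_integrand (hF : Measurable F) (hG : Measurable G)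
    (hw : Measurable w) (hF4 : MemLp F 4 volume) (hG4 : MemLp G 4 volume) (hw1 : Integrable w) :
    ∀ᵐ p : ℝ × ℝ, Integrable fun s => F (p.1 + s, p.2) * G (p.1, p.2 + s) * w s := by
  have hfin := (eLpNorm_lintegral_enorm_triangular_le hF hG hw).trans_lt
    (ENNReal.mul_lt_top (ENNReal.mul_lt_top (memLp_one_iff_integrable.2 hw1).eLpNorm_lt_top
      hF4.eLpNorm_lt_top) hG4.eLpNorm_lt_top)
  filter_upwards [ae_lt_top_of_eLpNorm_two_lt_top (by fun_prop) hfin] with p hp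
  exact ⟨by fun_prop, hp⟩

theorem sum_triangularOperator_dil_eq_sub (φ : ℝ → ℂ) {p : ℝ × ℝ}
    (hint : ∀ k : ℕ, Integrable fun s => F (p.1 + s, p.2) * G (p.1, p.2 + s) * dil φ (2 ^ k) s)
    (m : ℕ) :
    ∑ j ∈ Finset.Icc 1 m, triangularOperator F G (dil (fun u => φ u - 2 * φ (2 * u)) (2 ^ j)) p
      = triangularOperator F G (dil φ (2 ^ m)) p - triangularOperator F G (dil φ 1) p := by
  induction m with
  | zero => simp
  | succ m ih =>
    have hψ : dil (fun u => φ u - 2 * φ (2 * u)) (2 ^ (m + 1))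
        = dil φ (2 ^ (m + 1)) - dil φ (2 ^ m) := by
      rw [pow_succ']
      exact dil_two_mul_sub φ _
    rw [Finset.sum_Icc_succ_top (by omega), ih, hψ,
      triangularOperator_sub (hint (m + 1)) (hint m)]
    ring

theorem eLpNorm_sum_triangularOperator_dil_le (hF : Measurable F) (hG : Measurable G)
    (hF4 : MemLp F 4 volume) (hG4 : MemLp G 4 volume) {φ : ℝ → ℂ} (hφ : Measurable φ)
    (hφ1 : Integrable φ) (m : ℕ) :
    eLpNorm (fun p => ∑ j ∈ Finset.Icc 1 m,
        triangularOperator F G (dil (fun u => φ u - 2 * φ (2 * u)) (2 ^ j)) p) 2 volume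
      ≤ 2 * eLpNorm φ 1 volume * eLpNorm F 4 volume * eLpNorm G 4 volume := by
  have hdil (k : ℕ) : Measurable (dil φ (2 ^ k)) := measurable_dil hφ _
  have hint : ∀ᵐ p : ℝ × ℝ, ∀ k : ℕ,
      Integrable fun s => F (p.1 + s, p.2) * G (p.1, p.2 + s) * dil φ (2 ^ k) s :=
    ae_all_iff.2 fun k => ae_integrable_triangularOperator_integrand hF hG (hdil k) hF4 hG4
      ((hφ1.comp_mul_left' (by positivity)).const_mul _)
  have hT (k : ℕ) : eLpNorm (triangularOperator F G (dil φ (2 ^ k))) 2 volume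
      ≤ eLpNorm φ 1 volume * eLpNorm F 4 volume * eLpNorm G 4 volume := by
    simpa only [eLpNorm_one_dil hφ (by positivity : (2 : ℝ) ^ k ≠ 0)] using
      eLpNorm_triangularOperator_le hF hG (hdil k)
  calc _ = eLpNorm (triangularOperator F G (dil φ (2 ^ m))
          - triangularOperator F G (dil φ (2 ^ 0))) 2 volume := by
        refine eLpNorm_congr_ae (hint.mono fun p hp => ?_)
        simpa using sum_triangularOperator_dil_eq_sub φ hp m
    _ ≤ eLpNorm (triangularOperator F G (dil φ (2 ^ m))) 2 volume
          + eLpNorm (triangularOperator F G (dil φ (2 ^ 0))) 2 volume :=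
        eLpNorm_sub_le (aestronglyMeasurable_triangularOperator hF hG (hdil m))
          (aestronglyMeasurable_triangularOperator hF hG (hdil 0)) one_le_two
    _ ≤ _ := (add_le_add (hT m) (hT 0)).trans_eq (by ring)

end

/-- **Growth `O(m^{1/2})` for truncations of the triangular Hilbert transform.**
Let `φ` be a Schwartz function and `ψ(s) = φ(s) - 2φ(2s)`.  Define
`T_m(F,G)(x,y) = ∑_{j=1}^m ∫_ℝ F(x+s,y) G(x,y+s) 2^{-j} ψ(2^{-j}s) ds`.
Then there is a finite constant `C_ψ` such that for all `F, G ∈ L⁴(ℝ²)` and `m ∈ ℕ`,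
`‖T_m(F,G)‖_{L²(ℝ²)} ≤ C_ψ m^{1/2} ‖F‖_{L⁴(ℝ²)} ‖G‖_{L⁴(ℝ²)}`. -/
theorem truncated_triangular_hilbert_transform (φ : SchwartzMap ℝ ℂ) :
    ∃ C : ℝ≥0, ∀ (F G : ℝ × ℝ → ℂ), MemLp F 4 volume → MemLp G 4 volume →
      ∀ m : ℕ,
      eLpNorm
          (fun p : ℝ × ℝ => ∑ j ∈ Finset.Icc 1 m,
            ∫ s : ℝ, F (p.1 + s, p.2) * G (p.1, p.2 + s) *
              dil (fun u => φ u - 2 * φ (2 * u)) ((2 : ℝ) ^ j) s) 2 volume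
        ≤ (C : ℝ≥0∞) * (m : ℝ≥0∞) ^ (1 / 2 : ℝ) *
            eLpNorm F 4 volume * eLpNorm G 4 volume := by
  have hφ1 : eLpNorm φ 1 volume ≠ ∞ :=
    (memLp_one_iff_integrable.2 φ.integrable).eLpNorm_lt_top.ne
  refine ⟨2 * (eLpNorm φ 1 volume).toNNReal, fun F G hF hG m => ?_⟩
  rcases m.eq_zero_or_pos with rfl | hm
  · simp
  obtain ⟨F', hF'm, hFF'⟩ : ∃ F', Measurable F' ∧ F =ᵐ[volume] F' :=
    ⟨_, hF.1.aemeasurable.measurable_mk, hF.1.aemeasurable.ae_eq_mk⟩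
  obtain ⟨G', hG'm, hGG'⟩ : ∃ G', Measurable G' ∧ G =ᵐ[volume] G' :=
    ⟨_, hG.1.aemeasurable.measurable_mk, hG.1.aemeasurable.ae_eq_mk⟩
  calc _ = eLpNorm (fun p => ∑ j ∈ Finset.Icc 1 m,
        triangularOperator F' G' (dil (fun u => φ u - 2 * φ (2 * u)) (2 ^ j)) p) 2 volume :=
        eLpNorm_congr_ae <| (triangularOperator_ae_eq hFF' hGG').mono fun p hp =>
          Finset.sum_congr rfl fun j _ => hp _
    _ ≤ 2 * eLpNorm φ 1 volume * 1 * eLpNorm F 4 volume * eLpNorm G 4 volume := by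
        rw [mul_one, eLpNorm_congr_ae hFF', eLpNorm_congr_ae hGG']
        exact eLpNorm_sum_triangularOperator_dil_le hF'm hG'm (hF.ae_eq hFF') (hG.ae_eq hGG')
          φ.continuous.measurable φ.integrable m
    _ ≤ _ := by
        rw [ENNReal.coe_mul, ENNReal.coe_toNNReal hφ1, ENNReal.coe_ofNat]
        gcongr
        exact ENNReal.one_le_rpow (Nat.one_le_cast.2 hm) one_half_pos
end

section
/- Let ρ̃, ρ ∈ L¹(ℝ) and let F be a real-valued Schwartz function on ℝ². For t > 0 define Ξ_{ρ̃,ρ,t}(F) := ∫_{ℝ⁴} F(y,x') F(x,x') F(y,y') F(x,y') ρ̃_t(x' − y') ρ_t(x − y) dx dy dx' dy'. Then |Ξ_{ρ̃,ρ,t}(F)| ≤ ‖ρ̃‖_{L¹(ℝ)} ‖ρ‖_{L¹(ℝ)} ‖F‖_{L⁴(ℝ²)}⁴. -/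
/-!
Bound `Ξ` by the integral of absolute values and substitute `x = y + a`, `x' = y' + b`. For fixed
`(a, b)` the four factors of `F` become the translates of `|F|` by `(0, b)`, `(a, b)`, `0` and
`(a, 0)`, evaluated at `(y, y')`; by the pointwise inequality `4pqrs ≤ p⁴ + q⁴ + r⁴ + s⁴` and
translation invariance their product integrates over `(y, y')` to at most `‖F‖₄⁴`. What remains is
`∫∫ |ρ̃_t(b)| |ρ_t(a)| da db = ‖ρ̃_t‖₁ ‖ρ_t‖₁`, and dilation preserves the `L¹` norm.
-/

open MeasureTheory
open scoped ENNReal NNReal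

theorem ENNReal.four_mul_le_sum_pow_four (a b c d : ℝ≥0∞) :
    4 * (a * b * c * d) ≤ a ^ 4 + b ^ 4 + c ^ 4 + d ^ 4 := by
  by_cases h : a = ⊤ ∨ b = ⊤ ∨ c = ⊤ ∨ d = ⊤
  · rcases h with rfl | rfl | rfl | rfl <;> simp
  push Not at h
  obtain ⟨ha, hb, hc, hd⟩ := h
  lift a to ℝ≥0 using ha
  lift b to ℝ≥0 using hb
  lift c to ℝ≥0 using hc
  lift d to ℝ≥0 using hd
  norm_cast
  rw [← NNReal.coe_le_coe]
  push_cast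
  -- `a⁴ + b⁴ + c⁴ + d⁴ - 4abcd = (a² - b²)² + (c² - d²)² + 2 (ab - cd)²`
  nlinarith [sq_nonneg ((a : ℝ) ^ 2 - b ^ 2), sq_nonneg ((c : ℝ) ^ 2 - d ^ 2),
    sq_nonneg ((a : ℝ) * b - c * d)]

instance Prod.instMeasurableAdd {M N : Type*} [Add M] [Add N] [MeasurableSpace M]
    [MeasurableSpace N] [MeasurableAdd M] [MeasurableAdd N] : MeasurableAdd (M × N) :=
  ⟨fun c => (measurable_const_add c.1).prodMap (measurable_const_add c.2),
    fun c => (measurable_add_const c.1).prodMap (measurable_add_const c.2)⟩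

theorem lintegral_mul_translates_le {E : Type*} [AddGroup E] [MeasurableSpace E] [MeasurableAdd E]
    (μ : Measure E) [μ.IsAddLeftInvariant] {G : E → ℝ≥0∞} (hG : Measurable G)
    (c₁ c₂ c₃ c₄ : E) :
    ∫⁻ z, G (c₁ + z) * G (c₂ + z) * G (c₃ + z) * G (c₄ + z) ∂μ ≤ ∫⁻ z, G z ^ 4 ∂μ := by
  have hmeas (c : E) : Measurable fun z => G (c + z) ^ 4 :=
    (hG.comp (measurable_const_add c)).pow_const 4
  have htransl (c : E) : ∫⁻ z, G (c + z) ^ 4 ∂μ = ∫⁻ z, G z ^ 4 ∂μ :=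
    lintegral_add_left_eq_self (fun z => G z ^ 4) c
  refine (ENNReal.mul_le_mul_iff_right (by norm_num : (4 : ℝ≥0∞) ≠ 0) (by simp)).1 ?_
  calc 4 * ∫⁻ z, G (c₁ + z) * G (c₂ + z) * G (c₃ + z) * G (c₄ + z) ∂μ
      = ∫⁻ z, 4 * (G (c₁ + z) * G (c₂ + z) * G (c₃ + z) * G (c₄ + z)) ∂μ :=
        (lintegral_const_mul' _ _ (by simp)).symm
    _ ≤ ∫⁻ z, G (c₁ + z) ^ 4 + G (c₂ + z) ^ 4 + G (c₃ + z) ^ 4 + G (c₄ + z) ^ 4 ∂μ :=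
        lintegral_mono fun z => ENNReal.four_mul_le_sum_pow_four _ _ _ _
    _ = 4 * ∫⁻ z, G z ^ 4 ∂μ := by
        rw [lintegral_add_right _ (hmeas c₄), lintegral_add_right _ (hmeas c₃),
          lintegral_add_right _ (hmeas c₂), htransl, htransl, htransl, htransl]
        ring

theorem measurePreserving_prodProdProdComm {α β γ δ : Type*} [MeasurableSpace α]
    [MeasurableSpace β] [MeasurableSpace γ] [MeasurableSpace δ] (μa : Measure α) (μb : Measure β)
    (μc : Measure γ) (μd : Measure δ) [SFinite μa] [SFinite μb] [SFinite μc] [SFinite μd] :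
    MeasurePreserving (fun v : (α × β) × γ × δ => ((v.1.1, v.2.1), (v.1.2, v.2.2)))
      ((μa.prod μb).prod (μc.prod μd)) ((μa.prod μc).prod (μb.prod μd)) :=
  (measurePreserving_prodAssoc μa μc (μb.prod μd)).symm.comp <|
    ((MeasurePreserving.id μa).prod ((measurePreserving_prodAssoc μc μb μd).comp
      ((Measure.measurePreserving_swap.prod (MeasurePreserving.id μd)).comp
        (measurePreserving_prodAssoc μb μc μd).symm))).comp
      (measurePreserving_prodAssoc μa μb (μc.prod μd))

theorem lintegral_corners_mul_le {α β : Type*} [AddCommGroup α] [MeasurableSpace α]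
    [MeasurableAdd₂ α] [AddCommGroup β] [MeasurableSpace β] [MeasurableAdd₂ β]
    {μ : Measure α} [SFinite μ] [μ.IsAddLeftInvariant]
    {ν : Measure β} [SFinite ν] [ν.IsAddLeftInvariant]
    {G : α × β → ℝ≥0∞} (hG : Measurable G) {r : α → ℝ≥0∞} {r' : β → ℝ≥0∞}
    (hr : AEMeasurable r μ) (hr' : AEMeasurable r' ν) :
    ∫⁻ w, G (w.1.2, w.2.1) * G (w.1.1, w.2.1) * G (w.1.2, w.2.2) * G (w.1.1, w.2.2) *
        r' (w.2.1 - w.2.2) * r (w.1.1 - w.1.2) ∂((μ.prod μ).prod (ν.prod ν))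
      ≤ (∫⁻ s, r' s ∂ν) * (∫⁻ s, r s ∂μ) * ∫⁻ z, G z ^ 4 ∂(μ.prod ν) := by
  set P : α × β → α × β → ℝ≥0∞ := fun p z =>
    G ((0, p.2) + z) * G (p + z) * G (0 + z) * G ((p.1, 0) + z)
  have hS : MeasurePreserving
      (fun v : (α × β) × α × β => ((v.1.1 + v.2.1, v.2.1), (v.1.2 + v.2.2, v.2.2)))
      ((μ.prod ν).prod (μ.prod ν)) ((μ.prod μ).prod (ν.prod ν)) :=
    ((measurePreserving_add_prod μ μ).prod (measurePreserving_add_prod ν ν)).comp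
      (measurePreserving_prodProdProdComm μ ν μ ν)
  calc _ ≤ ∫⁻ v, r v.1.1 * r' v.1.2 * P v.1 v.2 ∂((μ.prod ν).prod (μ.prod ν)) := by
        refine hS.map_eq ▸ (lintegral_map_le _ _).trans_eq (lintegral_congr fun v => ?_)
        obtain ⟨⟨a, b⟩, y, y'⟩ := v
        simp only [P, Prod.mk_add_mk, zero_add, add_sub_cancel_right]
        ring
    _ ≤ ∫⁻ p, ∫⁻ z, r p.1 * r' p.2 * P p z ∂(μ.prod ν) ∂(μ.prod ν) := lintegral_prod_le _
    _ = ∫⁻ p, r p.1 * r' p.2 * ∫⁻ z, P p z ∂(μ.prod ν) ∂(μ.prod ν) :=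
        lintegral_congr fun p => lintegral_const_mul _ (by dsimp only [P]; fun_prop)
    _ ≤ ∫⁻ p, r p.1 * r' p.2 * ∫⁻ z, G z ^ 4 ∂(μ.prod ν) ∂(μ.prod ν) :=
        lintegral_mono fun p => mul_le_mul_right (lintegral_mul_translates_le _ hG _ _ _ _) _
    _ = _ := by
        rw [lintegral_mul_const'' _ (by fun_prop), lintegral_prod_mul hr hr']
        ring

theorem MeasureTheory.Integrable.dil {φ : ℝ → ℂ} (hφ : Integrable φ) {t : ℝ} (ht : t ≠ 0) :
    Integrable (dil φ t) :=
  (hφ.comp_mul_left' (inv_ne_zero ht)).const_mul _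

theorem integral_norm_dil (φ : ℝ → ℂ) {t : ℝ} (ht : 0 < t) :
    ∫ s, ‖dil φ t s‖ = ∫ s, ‖φ s‖ := by
  simp only [dil, norm_mul, norm_inv, Complex.norm_real, Real.norm_of_nonneg ht.le]
  rw [integral_const_mul, Measure.integral_comp_mul_left (fun s => ‖φ s‖), inv_inv,
    abs_of_pos ht, smul_eq_mul, ← mul_assoc, inv_mul_cancel₀ ht.ne', one_mul]

theorem lintegral_enorm_dil {φ : ℝ → ℂ} (hφ : Integrable φ) {t : ℝ} (ht : 0 < t) :
    ∫⁻ s, ‖dil φ t s‖ₑ = ENNReal.ofReal (∫ s, ‖φ s‖) := by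
  rw [← ofReal_integral_norm_eq_lintegral_enorm (hφ.dil ht.ne'), integral_norm_dil φ ht]

theorem Complex.enorm_real (x : ℝ) : ‖(x : ℂ)‖ₑ = ‖x‖ₑ := by
  simp only [enorm_eq_nnnorm, Complex.nnnorm_real]

theorem lintegral_enorm_pow_eq_eLpNorm_pow {E F : Type*} [MeasurableSpace E] {μ : Measure E}
    [NormedAddCommGroup F] (f : E → F) {p : ℕ} (hp : p ≠ 0) :
    ∫⁻ x, ‖f x‖ₑ ^ p ∂μ = eLpNorm f p μ ^ p := by
  simpa using
    (eLpNorm_nnreal_pow_eq_lintegral (f := f) (μ := μ) (p := p) (by exact_mod_cast hp)).symm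

/-- **Single-scale bound for the form `Ξ`.**
For `ρ̃, ρ ∈ L¹(ℝ)`, a real-valued Schwartz function `F` on `ℝ²`, and `t > 0`, the form
`Ξ_{ρ̃,ρ,t}(F) = ∫_{ℝ⁴} F(y,x')F(x,x')F(y,y')F(x,y') ρ̃_t(x'-y') ρ_t(x-y) dx dy dx' dy'`
satisfies `|Ξ_{ρ̃,ρ,t}(F)| ≤ ‖ρ̃‖_{L¹(ℝ)} ‖ρ‖_{L¹(ℝ)} ‖F‖_{L⁴(ℝ²)}⁴`. -/
theorem single_scale_Xi_bound (ρ' ρ : ℝ → ℂ) (hρ' : Integrable ρ') (hρ : Integrable ρ)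
    (F : SchwartzMap (ℝ × ℝ) ℝ) (t : ℝ) (ht : 0 < t) :
    ‖∫ w : (ℝ × ℝ) × ℝ × ℝ,
        (F (w.1.2, w.2.1) : ℂ) * (F (w.1.1, w.2.1) : ℂ) * (F (w.1.2, w.2.2) : ℂ) *
          (F (w.1.1, w.2.2) : ℂ) *
          dil ρ' t (w.2.1 - w.2.2) * dil ρ t (w.1.1 - w.1.2)‖
      ≤ (∫ u : ℝ, ‖ρ' u‖) * (∫ u : ℝ, ‖ρ u‖) * (eLpNorm (⇑F) 4 volume).toReal ^ 4 := by
  have hF := lintegral_enorm_pow_eq_eLpNorm_pow (μ := volume) F four_ne_zero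
  rw [Nat.cast_ofNat] at hF
  have hF_finite : eLpNorm F 4 volume ≠ ⊤ := (F.eLpNorm_lt_top 4 volume).ne
  refine (toReal_enorm _).symm.trans_le <| (ENNReal.toReal_mono
    (b := .ofReal (∫ u, ‖ρ' u‖) * .ofReal (∫ u, ‖ρ u‖) * eLpNorm F 4 volume ^ 4) ?_ ?_).trans_eq ?_
  · finiteness
  · refine (enorm_integral_le_lintegral_enorm _).trans ?_
    simp only [enorm_mul, Complex.enorm_real]
    rw [← lintegral_enorm_dil hρ' ht, ← lintegral_enorm_dil hρ ht, ← hF]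
    exact lintegral_corners_mul_le F.continuous.measurable.enorm
      (hρ.dil ht.ne').aemeasurable.enorm (hρ'.dil ht.ne').aemeasurable.enorm
  · rw [ENNReal.toReal_mul, ENNReal.toReal_mul, ENNReal.toReal_pow,
      ENNReal.toReal_ofReal (integral_nonneg fun _ => norm_nonneg _),
      ENNReal.toReal_ofReal (integral_nonneg fun _ => norm_nonneg _)]
end

section
/- Let λ > 0, let g(s) := e^{−π s²}, and define σ(s) := ∫_1^∞ α⁻¹ g(α⁻¹ s) α^{−λ} dα for s ∈ ℝ. Then there is a finite constant C_λ depending only on λ such that (1 + |s|)^{−λ} ≤ C_λ σ(s) for all s ∈ ℝ. -/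
open MeasureTheory
open scoped ENNReal NNReal

/-
For `b = 1 + |s|` and `α ∈ (b, 2b]` the Gaussian factor is at least `e^{-π}` and
`α^{-1-λ} ≥ (2b)^{-1-λ}`, so this window alone contributes at least
`e^{-π} 2^{-1-λ} b^{-λ}` to `σ(s)`; the rest of the integrand is nonnegative.
-/

namespace GaussianSuperposition

open Real Set

noncomputable def integrand (lam s α : ℝ) : ℝ :=
  α⁻¹ * exp (-π * (α⁻¹ * s) ^ 2) * α ^ (-lam)

variable {lam s α : ℝ}

lemma integrand_eq (hα : 0 < α) :
    integrand lam s α = exp (-π * (s / α) ^ 2) * α ^ (-(1 + lam)) := by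
  rw [integrand, neg_add, rpow_add hα, rpow_neg_one, div_eq_inv_mul]
  ring

lemma integrand_nonneg (hα : 0 ≤ α) : 0 ≤ integrand lam s α := by
  unfold integrand
  positivity

lemma integrand_le_rpow (hα : 0 < α) : integrand lam s α ≤ α ^ (-(1 + lam)) := by
  rw [integrand_eq hα]
  refine mul_le_of_le_one_left (rpow_nonneg hα.le _) (exp_le_one_iff.2 ?_)
  exact mul_nonpos_of_nonpos_of_nonneg (neg_nonpos.2 pi_pos.le) (sq_nonneg _)

lemma integrableOn_integrand (hlam : 0 < lam) (s : ℝ) :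
    IntegrableOn (integrand lam s) (Ioi 1) := by
  refine (integrableOn_Ioi_rpow_of_lt (a := -(1 + lam)) (by linarith) one_pos).mono' ?_ ?_
  · unfold integrand
    fun_prop
  · filter_upwards [ae_restrict_mem measurableSet_Ioi] with α (hα : 1 < α)
    rw [Real.norm_of_nonneg (integrand_nonneg (by linarith))]
    exact integrand_le_rpow (by linarith)

lemma exp_neg_pi_mul_rpow_le_integrand (hlam : 0 ≤ lam) {b : ℝ} (hs : |s| ≤ b)
    (hα : α ∈ Ioc b (2 * b)) :
    exp (-π) * (2 * b) ^ (-(1 + lam)) ≤ integrand lam s α := by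
  have hb : 0 ≤ b := (abs_nonneg s).trans hs
  have hα₀ : 0 < α := hb.trans_lt hα.1
  have hsα : (s / α) ^ 2 ≤ 1 := by
    rw [sq_le_one_iff_abs_le_one, abs_div, abs_of_pos hα₀, div_le_one hα₀]
    exact hs.trans hα.1.le
  rw [integrand_eq hα₀]
  refine mul_le_mul (exp_le_exp.2 (by nlinarith [pi_pos])) ?_ (by positivity) (exp_pos _).le
  exact rpow_le_rpow_of_nonpos hα₀ hα.2 (by linarith)

lemma exp_neg_pi_mul_rpow_le_integral (hlam : 0 < lam) (s : ℝ) :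
    exp (-π) * 2 ^ (-(1 + lam)) * (1 + |s|) ^ (-lam) ≤
      ∫ α in Ioi 1, integrand lam s α := by
  set b := 1 + |s|
  have hb : 0 < b := by positivity
  have hwindow : Ioc b (2 * b) ⊆ Ioi 1 := fun α hα =>
    (le_add_of_nonneg_right (abs_nonneg s)).trans_lt hα.1
  calc exp (-π) * 2 ^ (-(1 + lam)) * b ^ (-lam)
      = exp (-π) * (2 * b) ^ (-(1 + lam)) * volume.real (Ioc b (2 * b)) := by
        rw [volume_real_Ioc_of_le (by linarith), mul_rpow two_pos.le hb.le, neg_add,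
          rpow_add hb, rpow_neg_one]
        field_simp
        ring
    _ ≤ ∫ α in Ioc b (2 * b), integrand lam s α :=
        setIntegral_ge_of_const_le_real measurableSet_Ioc measure_Ioc_lt_top.ne
          (fun α hα => exp_neg_pi_mul_rpow_le_integrand hlam.le (by simp [b]) hα)
          ((integrableOn_integrand hlam s).mono_set hwindow)
    _ ≤ ∫ α in Ioi 1, integrand lam s α :=
        setIntegral_mono_set (integrableOn_integrand hlam s)
          (ae_restrict_of_forall_mem measurableSet_Ioi fun α (hα : 1 < α) =>
            integrand_nonneg (by linarith))
          (Filter.Eventually.of_forall hwindow)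

end GaussianSuperposition

/-- **Domination by a superposition of Gaussians.**
Let `λ > 0`, `g(s) = e^{-πs²}`, and `σ(s) = ∫_1^∞ α⁻¹ g(α⁻¹ s) α^{-λ} dα`.  Then there
is a finite constant `C_λ` such that `(1+|s|)^{-λ} ≤ C_λ σ(s)` for all `s ∈ ℝ`. -/
theorem gaussian_superposition_domination (lam : ℝ) (hlam : 0 < lam) :
    ∃ C : ℝ, ∀ s : ℝ,
      (1 + |s|) ^ (-lam)
        ≤ C * ∫ α in Set.Ioi (1 : ℝ),
            α⁻¹ * Real.exp (-Real.pi * (α⁻¹ * s) ^ 2) * α ^ (-lam) := by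
  refine ⟨Real.exp Real.pi * 2 ^ (1 + lam), fun s => ?_⟩
  calc (1 + |s|) ^ (-lam)
      = Real.exp Real.pi * 2 ^ (1 + lam) *
          (Real.exp (-Real.pi) * 2 ^ (-(1 + lam)) * (1 + |s|) ^ (-lam)) := by
        rw [Real.rpow_neg two_pos.le, Real.exp_neg]
        field_simp
    _ ≤ _ := mul_le_mul_of_nonneg_left
        (GaussianSuperposition.exp_neg_pi_mul_rpow_le_integral hlam s) (by positivity)
end

section
/- There is an absolute finite constant C such that the following holds. Let i ∈ ℤ and let a : [2^i, 2^{i+1}] → ℝ be continuously differentiable. Then for every m ∈ ℕ and all 2^i ≤ t₀ < t₁ < ⋯ < t_m ≤ 2^{i+1}: (i) Σ_{j=1}^{m} |a(t_j) − a(t_{j-1})|² ≤ C (∫_{2^i}^{2^{i+1}} a(t)² dt/t)^{1/2} (∫_{2^i}^{2^{i+1}} (t a'(t))² dt/t)^{1/2}, and (ii) Σ_{j=1}^{m} |a(t_j) − a(t_{j-1})|² ≤ ∫_{2^i}^{2^{i+1}} (t a'(t))² dt/t. -/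
/-!
Cauchy–Schwarz applied to `f d - f c = ∫_c^d f'` gives `(f d - f c)² ≤ (d - c) ∫_c^d f'²`. On a
dyadic interval `d - c ≤ t` for every `t` in it, so summing over the partition gives (ii).

For (i), fix a scale `h > 0`. If `d - c ≤ h` the same bound gives `(f d - f c)² ≤ h ∫_c^d f'²`;
otherwise `f c` and `f d` are each controlled on a window of length `h` by the minimum of `f²`
there plus the variation of `f` across the window. Either way
`(f d - f c)² ≤ 8 (h⁻¹ ∫_c^d f² + h ∫_c^d f'²)`; summing over the partition and optimising in `h`
bounds the sum by `16 (∫ f²)^{1/2} (∫ f'²)^{1/2}`, and on a dyadic interval the weights `1/t`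
and `t` of the two integrals are constant up to a factor `2`.
-/

open MeasureTheory Set Filter Topology

theorem sq_intervalIntegral_le_mul_integral_sq {c d : ℝ} {g : ℝ → ℝ} (hcd : c ≤ d)
    (hg : IntervalIntegrable g volume c d)
    (hg2 : IntervalIntegrable (fun x => g x ^ 2) volume c d) :
    (∫ x in c..d, g x) ^ 2 ≤ (d - c) * ∫ x in c..d, g x ^ 2 := by
  rcases hcd.eq_or_lt with rfl | hcd
  · simp
  set I := ∫ x in c..d, g x
  set μ := I / (d - c)
  -- `2 μ g ≤ g² + μ²` pointwise, integrated with `μ` the mean of `g`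
  have hint : 2 * μ * I ≤ (∫ x in c..d, g x ^ 2) + μ ^ 2 * (d - c) := by
    have := intervalIntegral.integral_mono_on hcd.le (hg.const_mul (2 * μ))
      (hg2.add (intervalIntegrable_const (c := μ ^ 2)))
      fun x _ => by nlinarith [sq_nonneg (g x - μ)]
    simpa [intervalIntegral.integral_const_mul,
      intervalIntegral.integral_add hg2 intervalIntegrable_const, mul_comm] using this
  have hμ : μ * (d - c) = I := div_mul_cancel₀ _ (sub_pos.2 hcd).ne'
  nlinarith [sub_pos.2 hcd]

theorem le_two_mul_sqrt_of_forall_le_div_add_mul {S X Y : ℝ} (hX : 0 ≤ X) (hY : 0 ≤ Y)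
    (hS : ∀ h > 0, S ≤ X / h + h * Y) : S ≤ 2 * √(X * Y) := by
  rw [Real.sqrt_mul hX]
  set x := √X
  set y := √Y
  have hx : 0 ≤ x := Real.sqrt_nonneg X
  have hy : 0 ≤ y := Real.sqrt_nonneg Y
  have hxx : x ^ 2 = X := Real.sq_sqrt hX
  have hyy : y ^ 2 = Y := Real.sq_sqrt hY
  -- `h = x / y` is optimal; perturb it so that it stays positive when `x` or `y` vanishes
  have hδ : ∀ δ > 0, S ≤ 2 * (x * y) + δ * (x + y) := fun δ hδ => by
    have h1 : X / ((x + δ) / (y + δ)) ≤ x * (y + δ) := by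
      rw [div_div_eq_mul_div, div_le_iff₀ (by positivity), ← hxx]
      nlinarith [mul_nonneg (mul_nonneg hx hδ.le) (add_nonneg hy hδ.le)]
    have h2 : (x + δ) / (y + δ) * Y ≤ (x + δ) * y := by
      rw [div_mul_eq_mul_div, div_le_iff₀ (by positivity), ← hyy]
      nlinarith [mul_nonneg (mul_nonneg (add_nonneg hx hδ.le) hy) hδ.le]
    linarith [hS _ (by positivity : 0 < (x + δ) / (y + δ))]
  have hlim : Tendsto (fun δ => 2 * (x * y) + δ * (x + y)) (𝓝[>] 0) (𝓝 (2 * (x * y))) := by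
    refine ((Continuous.tendsto (by fun_prop) 0).mono_left nhdsWithin_le_nhds).trans_eq ?_
    simp
  exact ge_of_tendsto hlim (eventually_nhdsWithin_of_forall hδ)

section

variable {α β : ℝ} {f f' : ℝ → ℝ}

theorem integral_eq_sub_of_hasDerivWithinAt_of_mem_Icc
    (hder : ∀ x ∈ Icc α β, HasDerivWithinAt f (f' x) (Icc α β) x)
    (hf' : ContinuousOn f' (Icc α β)) {x y : ℝ} (hx : x ∈ Icc α β) (hy : y ∈ Icc α β)
    (hxy : x ≤ y) :
    ∫ u in x..y, f' u = f y - f x := by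
  have hsub : Icc x y ⊆ Icc α β := Icc_subset_Icc hx.1 hy.2
  refine intervalIntegral.integral_eq_sub_of_hasDerivAt_of_le hxy
    (fun z hz => (hder z (hsub hz)).continuousWithinAt.mono hsub) (fun z hz => ?_)
    (hf'.mono (uIcc_subset_Icc hx hy)).intervalIntegrable
  exact (hder z (hsub (Ioo_subset_Icc_self hz))).hasDerivAt
    (Icc_mem_nhds (hx.1.trans_lt hz.1) (hz.2.trans_le hy.2))

theorem sq_sub_le_mul_integral_sq_deriv
    (hder : ∀ x ∈ Icc α β, HasDerivWithinAt f (f' x) (Icc α β) x)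
    (hf' : ContinuousOn f' (Icc α β)) {x y : ℝ} (hx : x ∈ Icc α β) (hy : y ∈ Icc α β)
    (hxy : x ≤ y) :
    (f y - f x) ^ 2 ≤ (y - x) * ∫ u in x..y, f' u ^ 2 := by
  rw [← integral_eq_sub_of_hasDerivWithinAt_of_mem_Icc hder hf' hx hy hxy]
  have hf'xy := hf'.mono (uIcc_subset_Icc hx hy)
  exact sq_intervalIntegral_le_mul_integral_sq hxy hf'xy.intervalIntegrable
    (hf'xy.pow 2).intervalIntegrable

theorem sq_le_integral_sq_add_integral_sq_deriv
    (hder : ∀ x ∈ Icc α β, HasDerivWithinAt f (f' x) (Icc α β) x)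
    (hf' : ContinuousOn f' (Icc α β)) {p q : ℝ} (hpq : p < q) (hsub : Icc p q ⊆ Icc α β)
    {s : ℝ} (hs : s ∈ Icc p q) :
    f s ^ 2 ≤ 2 / (q - p) * (∫ x in p..q, f x ^ 2) + 2 * (q - p) * ∫ x in p..q, f' x ^ 2 := by
  have hf : ContinuousOn f (Icc α β) := fun x hx => (hder x hx).continuousWithinAt
  obtain ⟨u, hu, hmin⟩ := isCompact_Icc.exists_isMinOn (nonempty_Icc.2 hpq.le)
    ((hf.mono hsub).pow 2)
  have hmean : f u ^ 2 * (q - p) ≤ ∫ x in p..q, f x ^ 2 := by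
    have := intervalIntegral.integral_mono_on (μ := volume) hpq.le intervalIntegrable_const
      (ContinuousOn.intervalIntegrable_of_Icc hpq.le ((hf.mono hsub).pow 2)) fun x hx => hmin hx
    simpa [mul_comm] using this
  have hvar : ∀ x ∈ Icc p q, ∀ y ∈ Icc p q, x ≤ y →
      (f y - f x) ^ 2 ≤ (q - p) * ∫ x in p..q, f' x ^ 2 := by
    intro x hx y hy hxy
    refine (sq_sub_le_mul_integral_sq_deriv hder hf' (hsub hx) (hsub hy) hxy).trans ?_
    refine mul_le_mul (by linarith [hx.1, hy.2]) ?_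
      (intervalIntegral.integral_nonneg hxy fun _ _ => sq_nonneg _) (sub_pos.2 hpq).le
    exact intervalIntegral.integral_mono_interval hx.1 hxy hy.2
      (ae_of_all _ fun _ => sq_nonneg _)
      (ContinuousOn.intervalIntegrable_of_Icc hpq.le ((hf'.mono hsub).pow 2))
  have hsu : (f s - f u) ^ 2 ≤ (q - p) * ∫ x in p..q, f' x ^ 2 := by
    rcases le_total u s with hus | hsu
    · exact hvar u hu s hs hus
    · rw [← neg_sub, neg_sq]; exact hvar s hs u hu hsu
  have hu' : f u ^ 2 ≤ (∫ x in p..q, f x ^ 2) / (q - p) :=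
    (le_div_iff₀ (sub_pos.2 hpq)).2 hmean
  calc f s ^ 2 ≤ 2 * f u ^ 2 + 2 * (f s - f u) ^ 2 := by nlinarith [sq_nonneg (f s - 2 * f u)]
    _ ≤ _ := by rw [div_mul_eq_mul_div, mul_div_assoc]; linarith

theorem sq_sub_le_integral_sq_add_integral_sq_deriv
    (hder : ∀ x ∈ Icc α β, HasDerivWithinAt f (f' x) (Icc α β) x)
    (hf' : ContinuousOn f' (Icc α β)) {c d : ℝ} (hcd : c ≤ d) (hsub : Icc c d ⊆ Icc α β)
    {h : ℝ} (hh : 0 < h) :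
    (f d - f c) ^ 2 ≤ 8 / h * (∫ x in c..d, f x ^ 2) + 8 * h * ∫ x in c..d, f' x ^ 2 := by
  have hf : ContinuousOn f (Icc α β) := fun x hx => (hder x hx).continuousWithinAt
  have hX : 0 ≤ 8 / h * ∫ x in c..d, f x ^ 2 :=
    mul_nonneg (by positivity) (intervalIntegral.integral_nonneg hcd fun _ _ => sq_nonneg _)
  have hY : 0 ≤ ∫ x in c..d, f' x ^ 2 :=
    intervalIntegral.integral_nonneg hcd fun _ _ => sq_nonneg _
  rcases le_total (d - c) h with hshort | hlong
  · have := sq_sub_le_mul_integral_sq_deriv hder hf' (hsub (left_mem_Icc.2 hcd))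
      (hsub (right_mem_Icc.2 hcd)) hcd
    nlinarith
  -- otherwise bound `f c` and `f d` separately on windows of length `h` at either end
  have hsq_mono : ∀ {g : ℝ → ℝ}, ContinuousOn g (Icc α β) → ∀ {p q : ℝ},
      c ≤ p → p ≤ q → q ≤ d → ∫ x in p..q, g x ^ 2 ≤ ∫ x in c..d, g x ^ 2 :=
    fun hg _ _ hcp hpq hqd =>
    intervalIntegral.integral_mono_interval hcp hpq hqd (ae_of_all _ fun _ => sq_nonneg _)
      (ContinuousOn.intervalIntegrable_of_Icc hcd ((hg.mono hsub).pow 2))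
  have hc := sq_le_integral_sq_add_integral_sq_deriv hder hf' (lt_add_of_pos_right c hh)
    ((Icc_subset_Icc le_rfl (by linarith)).trans hsub) (left_mem_Icc.2 (by linarith))
  have hd := sq_le_integral_sq_add_integral_sq_deriv hder hf' (sub_lt_self d hh)
    ((Icc_subset_Icc (by linarith) le_rfl).trans hsub) (right_mem_Icc.2 (by linarith))
  rw [add_sub_cancel_left] at hc
  rw [sub_sub_cancel] at hd
  calc (f d - f c) ^ 2 ≤ 2 * f c ^ 2 + 2 * f d ^ 2 := by nlinarith [sq_nonneg (f c + f d)]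
    _ ≤ 2 * (2 / h * (∫ x in c..d, f x ^ 2) + 2 * h * ∫ x in c..d, f' x ^ 2)
        + 2 * (2 / h * (∫ x in c..d, f x ^ 2) + 2 * h * ∫ x in c..d, f' x ^ 2) := by
      have hXc := hsq_mono hf le_rfl (le_add_of_nonneg_right hh.le) (by linarith)
      have hYc := hsq_mono hf' le_rfl (le_add_of_nonneg_right hh.le) (by linarith)
      have hXd := hsq_mono hf (by linarith) (sub_le_self d hh.le) le_rfl
      have hYd := hsq_mono hf' (by linarith) (sub_le_self d hh.le) le_rfl
      gcongr
      · exact hc.trans (by gcongr)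
      · exact hd.trans (by gcongr)
    _ = _ := by ring

theorem sum_integral_le_integral_of_partition {g : ℝ → ℝ} (hg : ContinuousOn g (Icc α β))
    (hg0 : ∀ x ∈ Icc α β, 0 ≤ g x) {m : ℕ} {t : ℕ → ℝ} (ht : ∀ j ≤ m, t j ∈ Icc α β)
    (hmono : ∀ j < m, t j ≤ t (j + 1)) :
    ∑ j ∈ Finset.range m, ∫ x in t j..t (j + 1), g x ≤ ∫ x in α..β, g x := by
  rw [intervalIntegral.sum_integral_adjacent_intervals fun j hj =>
    (hg.mono (uIcc_subset_Icc (ht j hj.le) (ht (j + 1) hj))).intervalIntegrable]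
  have h0m : t 0 ≤ t m := sub_nonneg.1 <| Finset.sum_range_sub t m ▸
    Finset.sum_nonneg fun j hj => sub_nonneg.2 (hmono j (Finset.mem_range.1 hj))
  have hαβ : α ≤ β := (ht 0 m.zero_le).1.trans (ht 0 m.zero_le).2
  exact intervalIntegral.integral_mono_interval (ht 0 m.zero_le).1 h0m (ht m le_rfl).2
    ((ae_restrict_mem measurableSet_Ioc).mono fun x hx => hg0 x (Ioc_subset_Icc_self hx))
    (hg.intervalIntegrable_of_Icc hαβ)

theorem sum_sq_sub_le_integral_sq_add_integral_sq_deriv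
    (hder : ∀ x ∈ Icc α β, HasDerivWithinAt f (f' x) (Icc α β) x)
    (hf' : ContinuousOn f' (Icc α β)) {m : ℕ} {t : ℕ → ℝ} (ht : ∀ j ≤ m, t j ∈ Icc α β)
    (hmono : ∀ j < m, t j ≤ t (j + 1)) {h : ℝ} (hh : 0 < h) :
    ∑ j ∈ Finset.range m, (f (t (j + 1)) - f (t j)) ^ 2
      ≤ 8 / h * (∫ x in α..β, f x ^ 2) + 8 * h * ∫ x in α..β, f' x ^ 2 := by
  have hf : ContinuousOn f (Icc α β) := fun x hx => (hder x hx).continuousWithinAt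
  calc ∑ j ∈ Finset.range m, (f (t (j + 1)) - f (t j)) ^ 2
      ≤ ∑ j ∈ Finset.range m, (8 / h * (∫ x in t j..t (j + 1), f x ^ 2)
          + 8 * h * ∫ x in t j..t (j + 1), f' x ^ 2) :=
        Finset.sum_le_sum fun j hj => by
          have hj := Finset.mem_range.1 hj
          exact sq_sub_le_integral_sq_add_integral_sq_deriv hder hf' (hmono j hj)
            (Icc_subset_Icc (ht j hj.le).1 (ht (j + 1) hj).2) hh
    _ = 8 / h * (∑ j ∈ Finset.range m, ∫ x in t j..t (j + 1), f x ^ 2)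
        + 8 * h * ∑ j ∈ Finset.range m, ∫ x in t j..t (j + 1), f' x ^ 2 := by
        rw [Finset.sum_add_distrib, Finset.mul_sum, Finset.mul_sum]
    _ ≤ 8 / h * (∫ x in α..β, f x ^ 2) + 8 * h * ∫ x in α..β, f' x ^ 2 := by
        gcongr
        · exact sum_integral_le_integral_of_partition (hf.pow 2) (fun _ _ => sq_nonneg _) ht
            hmono
        · exact sum_integral_le_integral_of_partition (hf'.pow 2) (fun _ _ => sq_nonneg _) ht
            hmono

theorem sum_sq_sub_le_sqrt_integral_mul_sqrt_integral (hα : 0 < α) (hβ : β ≤ 2 * α)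
    (hder : ∀ x ∈ Icc α β, HasDerivWithinAt f (f' x) (Icc α β) x)
    (hf' : ContinuousOn f' (Icc α β)) {m : ℕ} {t : ℕ → ℝ} (ht : ∀ j ≤ m, t j ∈ Icc α β)
    (hmono : ∀ j < m, t j ≤ t (j + 1)) :
    ∑ j ∈ Finset.range m, (f (t (j + 1)) - f (t j)) ^ 2
      ≤ 16 * √2 * √(∫ x in α..β, f x ^ 2 / x) * √(∫ x in α..β, (x * f' x) ^ 2 / x) := by
  have hαβ : α ≤ β := (ht 0 m.zero_le).1.trans (ht 0 m.zero_le).2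
  have hf : ContinuousOn f (Icc α β) := fun x hx => (hder x hx).continuousWithinAt
  have hpos : ∀ x ∈ Icc α β, 0 < x := fun x hx => hα.trans_le hx.1
  set X := ∫ x in α..β, f x ^ 2
  set Y := ∫ x in α..β, f' x ^ 2
  set A := ∫ x in α..β, f x ^ 2 / x
  set B := ∫ x in α..β, (x * f' x) ^ 2 / x
  have hXA : X ≤ 2 * α * A := by
    rw [← intervalIntegral.integral_const_mul]
    refine intervalIntegral.integral_mono_on hαβ ((hf.pow 2).intervalIntegrable_of_Icc hαβ)
      (((hf.pow 2).div continuousOn_id fun x hx => (hpos x hx).ne').intervalIntegrable_of_Icc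
        hαβ |>.const_mul _) fun x hx => ?_
    rw [mul_div_assoc', le_div_iff₀ (hpos x hx)]
    nlinarith [sq_nonneg (f x), hx.2]
  have hB : ContinuousOn (fun x => (x * f' x) ^ 2 / x) (Icc α β) :=
    ((continuousOn_id.mul hf').pow 2).div continuousOn_id fun x hx => (hpos x hx).ne'
  have hYB : Y ≤ α⁻¹ * B := by
    rw [← intervalIntegral.integral_const_mul]
    refine intervalIntegral.integral_mono_on hαβ ((hf'.pow 2).intervalIntegrable_of_Icc hαβ)
      ((hB.intervalIntegrable_of_Icc hαβ).const_mul _) fun x hx => ?_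
    have hx0 := (hpos x hx).ne'
    rw [show (x * f' x) ^ 2 / x = x * f' x ^ 2 by field_simp, inv_mul_eq_div, le_div_iff₀ hα,
      mul_comm]
    exact mul_le_mul_of_nonneg_right hx.1 (sq_nonneg _)
  have hX0 : 0 ≤ X := intervalIntegral.integral_nonneg hαβ fun _ _ => sq_nonneg _
  have hY0 : 0 ≤ Y := intervalIntegral.integral_nonneg hαβ fun _ _ => sq_nonneg _
  have hS := le_two_mul_sqrt_of_forall_le_div_add_mul (by positivity) (by positivity)
    fun h hh => (sum_sq_sub_le_integral_sq_add_integral_sq_deriv hder hf' ht hmono hh).trans_eq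
      (by ring : 8 / h * X + 8 * h * Y = 8 * X / h + h * (8 * Y))
  have hA0 : 0 ≤ A := intervalIntegral.integral_nonneg hαβ fun x hx =>
    div_nonneg (sq_nonneg _) (hpos x hx).le
  calc _ ≤ 2 * √(8 * X * (8 * Y)) := hS
    _ = 16 * √(X * Y) := by
      rw [show 8 * X * (8 * Y) = 8 ^ 2 * (X * Y) by ring, Real.sqrt_mul (by positivity),
        Real.sqrt_sq (by norm_num)]
      ring
    _ ≤ 16 * √(2 * (A * B)) := by
      gcongr 16 * √?_
      calc X * Y ≤ 2 * α * A * (α⁻¹ * B) := mul_le_mul hXA hYB hY0 (by positivity)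
        _ = 2 * (A * B) := by field_simp
    _ = 16 * √2 * √A * √B := by
      rw [Real.sqrt_mul (by norm_num), Real.sqrt_mul hA0]
      ring

theorem sum_sq_sub_le_integral_mul_deriv_sq_div (hα : 0 < α) (hβ : β ≤ 2 * α)
    (hder : ∀ x ∈ Icc α β, HasDerivWithinAt f (f' x) (Icc α β) x)
    (hf' : ContinuousOn f' (Icc α β)) {m : ℕ} {t : ℕ → ℝ} (ht : ∀ j ≤ m, t j ∈ Icc α β)
    (hmono : ∀ j < m, t j ≤ t (j + 1)) :
    ∑ j ∈ Finset.range m, (f (t (j + 1)) - f (t j)) ^ 2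
      ≤ ∫ x in α..β, (x * f' x) ^ 2 / x := by
  have hpos : ∀ x ∈ Icc α β, 0 < x := fun x hx => hα.trans_le hx.1
  have hB : ContinuousOn (fun x => (x * f' x) ^ 2 / x) (Icc α β) :=
    ((continuousOn_id.mul hf').pow 2).div continuousOn_id fun x hx => (hpos x hx).ne'
  refine (Finset.sum_le_sum fun j hj => ?_).trans (sum_integral_le_integral_of_partition hB
    (fun x hx => div_nonneg (sq_nonneg _) (hpos x hx).le) ht hmono)
  have hj := Finset.mem_range.1 hj
  have hc := ht j hj.le
  have hd := ht (j + 1) hj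
  refine (sq_sub_le_mul_integral_sq_deriv hder hf' hc hd (hmono j hj)).trans ?_
  rw [← intervalIntegral.integral_const_mul]
  -- on a dyadic interval the length of `[c, d]` is at most any point of it
  refine intervalIntegral.integral_mono_on (hmono j hj)
    (((hf'.mono (uIcc_subset_Icc hc hd)).pow 2).intervalIntegrable.const_mul _)
    (hB.mono (uIcc_subset_Icc hc hd)).intervalIntegrable fun x hx => ?_
  have hx0 := (hpos x (Icc_subset_Icc hc.1 hd.2 hx)).ne'
  rw [show (x * f' x) ^ 2 / x = x * f' x ^ 2 by field_simp]
  exact mul_le_mul_of_nonneg_right (by linarith [hx.1, hc.1, hd.2]) (sq_nonneg _)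

end

/-- **Appendix lemma (Lemma 13).**
There is an absolute finite constant `C` such that for every `i ∈ ℤ`, every
continuously differentiable `a : [2^i, 2^{i+1}] → ℝ`, and all
`2^i ≤ t₀ < t₁ < ⋯ < t_m ≤ 2^{i+1}`:
(i) `∑_{j=1}^m |a(t_j) - a(t_{j-1})|²
      ≤ C (∫_{2^i}^{2^{i+1}} a(t)² dt/t)^{1/2} (∫_{2^i}^{2^{i+1}} (t a'(t))² dt/t)^{1/2}`,
(ii) `∑_{j=1}^m |a(t_j) - a(t_{j-1})|² ≤ ∫_{2^i}^{2^{i+1}} (t a'(t))² dt/t`. -/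
theorem appendix_variation_lemma :
    ∃ C : ℝ, ∀ (i : ℤ) (a : ℝ → ℝ),
      ContDiffOn ℝ 1 a (Set.Icc ((2 : ℝ) ^ i) ((2 : ℝ) ^ (i + 1))) →
      ∀ (m : ℕ) (t : ℕ → ℝ),
        (∀ j, j ≤ m → t j ∈ Set.Icc ((2 : ℝ) ^ i) ((2 : ℝ) ^ (i + 1))) →
        (∀ j, j < m → t j < t (j + 1)) →
        (∑ j ∈ Finset.range m, (a (t (j + 1)) - a (t j)) ^ 2
            ≤ C *
              Real.sqrt (∫ τ in Set.Icc ((2 : ℝ) ^ i) ((2 : ℝ) ^ (i + 1)), (a τ) ^ 2 / τ) *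
              Real.sqrt (∫ τ in Set.Icc ((2 : ℝ) ^ i) ((2 : ℝ) ^ (i + 1)),
                (τ * derivWithin a (Set.Icc ((2 : ℝ) ^ i) ((2 : ℝ) ^ (i + 1))) τ) ^ 2 / τ)) ∧
        (∑ j ∈ Finset.range m, (a (t (j + 1)) - a (t j)) ^ 2
            ≤ ∫ τ in Set.Icc ((2 : ℝ) ^ i) ((2 : ℝ) ^ (i + 1)),
                (τ * derivWithin a (Set.Icc ((2 : ℝ) ^ i) ((2 : ℝ) ^ (i + 1))) τ) ^ 2 / τ) := by
  refine ⟨16 * √2, fun i a ha m t ht hinc => ?_⟩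
  have hα : (0 : ℝ) < 2 ^ i := zpow_pos two_pos i
  have hβ : (2 : ℝ) ^ (i + 1) ≤ 2 * 2 ^ i := by rw [zpow_add_one₀ two_ne_zero, mul_comm]
  have hαβ : (2 : ℝ) ^ i < 2 ^ (i + 1) := by
    rw [zpow_add_one₀ two_ne_zero]; linarith
  have hder (x) (hx : x ∈ Icc ((2 : ℝ) ^ i) (2 ^ (i + 1))) :=
    (ha.differentiableOn one_ne_zero x hx).hasDerivWithinAt
  have hf' := ha.continuousOn_derivWithin (uniqueDiffOn_Icc hαβ) le_rfl
  have hmono : ∀ j < m, t j ≤ t (j + 1) := fun j hj => (hinc j hj).le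
  simp only [integral_Icc_eq_integral_Ioc, ← intervalIntegral.integral_of_le hαβ.le]
  exact ⟨sum_sq_sub_le_sqrt_integral_mul_sqrt_integral hα hβ hder hf' ht hmono,
    sum_sq_sub_le_integral_mul_deriv_sq_div hα hβ hder hf' ht hmono⟩
end
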